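/- arXiv:1810.06397 — 3 statements merged into one kernel-verified Lean document; each statement's English description precedes it below -/
import Mathlib

section
/- For every f ∈ B₂(X) with Barron norm γ₂(f), and every m ∈ ℕ, there exists a two-layer network f(x;θ̃) = ∑_{k=1}^m a_k σ(⟨w_k, x⟩) of width m such that E_x[(f(x) − f(x;θ̃))²] ≤ 3γ₂²(f)/m and the path norm satisfies ‖θ̃‖_P = ∑_{k=1}^m |a_k|‖w_k‖₁ ≤ 2γ₂(f). -/
/-! Sample `w₁, …, w_m` i.i.d. from `π` and take `a_k = a(w_k)/m`. For each `x` the empirical mean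
of `a(w)σ(⟨w,x⟩)` has mean squared error `Var/m ≤ γ²/m`, so by Tonelli the expected `L²(μ)`
error is at most `γ²/m`, while the expected path norm is `E|a| ≤ γ`. Markov's inequality for the
two nonnegative quantities, with thresholds `3×` and `2×` their means (`1/3 + 1/2 ≤ 1`), yields
one sample satisfying both bounds. -/

open MeasureTheory

/-- The unit ℓ¹ sphere `S^d = {w : ‖w‖₁ = 1}` in ℝ^d. -/
def Sphere1 (d : ℕ) : Type := {w : Fin d → ℝ // ∑ i, |w i| = 1}

instance (d : ℕ) : MeasurableSpace (Sphere1 d) := Subtype.instMeasurableSpace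

/-- The cube `X = [-1,1]^d`. -/
def Cube (d : ℕ) : Type := {x : Fin d → ℝ // ∀ i, |x i| ≤ 1}

instance (d : ℕ) : MeasurableSpace (Cube d) := Subtype.instMeasurableSpace

open ProbabilityTheory
open scoped ENNReal

theorem integral_le_of_lintegral_ofReal_le {α : Type*} [MeasurableSpace α] {μ : Measure α}
    {f : α → ℝ} {c : ℝ} (hf : 0 ≤ f) (hc : 0 ≤ c)
    (h : ∫⁻ x, ENNReal.ofReal (f x) ∂μ ≤ ENNReal.ofReal c) : ∫ x, f x ∂μ ≤ c := by
  by_cases hm : AEStronglyMeasurable f μ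
  · rw [integral_eq_lintegral_of_nonneg_ae (.of_forall hf) hm]
    exact ENNReal.toReal_le_of_le_ofReal hc h
  · rwa [integral_non_aestronglyMeasurable hm]

section MonteCarlo

variable {Ω : Type*} [MeasurableSpace Ω] (ν : Measure Ω) [IsProbabilityMeasure ν]

theorem integral_sum_comp_eval_pi {φ : Ω → ℝ} (hφ : Integrable φ ν) (m : ℕ) :
    ∫ W : Fin m → Ω, ∑ k, φ (W k) ∂(Measure.pi fun _ => ν) = m * ∫ w, φ w ∂ν := by
  rw [integral_finsetSum _ fun k _ => integrable_comp_eval hφ]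
  simp [integral_comp_eval (μ := fun _ : Fin m => ν) hφ.aestronglyMeasurable]

theorem memLp_empiricalMean_pi {φ : Ω → ℝ} (hφ : MemLp φ 2 ν) (m : ℕ) :
    MemLp (fun W : Fin m → Ω => (m : ℝ)⁻¹ * ∑ k, φ (W k)) 2 (Measure.pi fun _ => ν) :=
  (memLp_finsetSum _ fun k _ => hφ.comp_measurePreserving (measurePreserving_eval _ k)).const_mul _

theorem integral_sq_sub_empiricalMean_pi {φ : Ω → ℝ} (hφ : MemLp φ 2 ν) {m : ℕ} (hm : m ≠ 0) :
    ∫ W : Fin m → Ω, (∫ w, φ w ∂ν - (m : ℝ)⁻¹ * ∑ k, φ (W k)) ^ 2 ∂(Measure.pi fun _ => ν)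
      = Var[φ; ν] / m := by
  have hmean : ∫ W : Fin m → Ω, (m : ℝ)⁻¹ * ∑ k, φ (W k) ∂(Measure.pi fun _ => ν)
      = ∫ w, φ w ∂ν := by
    rw [integral_const_mul, integral_sum_comp_eval_pi ν (hφ.integrable one_le_two)]
    field_simp
  have hvar : Var[fun W : Fin m → Ω => (m : ℝ)⁻¹ * ∑ k, φ (W k); Measure.pi fun _ => ν]
      = Var[φ; ν] / m := by
    have hsum := variance_sum_pi (μ := fun _ : Fin m => ν) (X := fun _ => φ) fun _ => hφ
    rw [Finset.sum_fn, Finset.sum_const, Finset.card_univ, Fintype.card_fin, nsmul_eq_mul] at hsum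
    rw [variance_const_mul, hsum]
    field_simp
  rw [← hvar, variance_eq_integral (memLp_empiricalMean_pi ν hφ m).aemeasurable, hmean]
  simp_rw [sub_sq_comm]

theorem measurable_sq_sub_empiricalMean {E : Type*} [MeasurableSpace E] {g : Ω → E → ℝ}
    (hg : Measurable (Function.uncurry g)) (m : ℕ) :
    Measurable (Function.uncurry fun (W : Fin m → Ω) x =>
      ENNReal.ofReal ((∫ w, g w x ∂ν - (m : ℝ)⁻¹ * ∑ k, g (W k) x) ^ 2)) := by
  have hmean : Measurable fun x => ∫ w, g w x ∂ν :=
    hg.stronglyMeasurable.integral_prod_left.measurable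
  have hterm : ∀ k : Fin m, Measurable fun p : (Fin m → Ω) × E => g (p.1 k) p.2 := fun k =>
    hg.comp (f := fun p : (Fin m → Ω) × E => (p.1 k, p.2)) (by fun_prop)
  exact (((hmean.comp measurable_snd).sub (measurable_const.mul
    (Finset.measurable_sum _ fun k _ => hterm k))).pow_const 2).ennreal_ofReal

theorem lintegral_lintegral_sq_sub_empiricalMean_le {E : Type*} [MeasurableSpace E]
    (μ : Measure E) [IsProbabilityMeasure μ] {g : Ω → E → ℝ} (hg : Measurable (Function.uncurry g))
    (hg2 : ∀ x, MemLp (g · x) 2 ν) {V : ℝ} (hV : ∀ x, Var[(g · x); ν] ≤ V) {m : ℕ} (hm : m ≠ 0) :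
    ∫⁻ W : Fin m → Ω, ∫⁻ x, ENNReal.ofReal ((∫ w, g w x ∂ν - (m : ℝ)⁻¹ * ∑ k, g (W k) x) ^ 2) ∂μ
      ∂(Measure.pi fun _ => ν) ≤ ENNReal.ofReal (V / m) := by
  have hjoint := measurable_sq_sub_empiricalMean ν hg m
  have hint : ∀ x, Integrable (fun W : Fin m → Ω =>
      (∫ w, g w x ∂ν - (m : ℝ)⁻¹ * ∑ k, g (W k) x) ^ 2) (Measure.pi fun _ => ν) := fun x =>
    ((memLp_const _).sub (memLp_empiricalMean_pi ν (hg2 x) m)).integrable_sq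
  rw [lintegral_lintegral_swap hjoint.aemeasurable]
  calc _ ≤ ∫⁻ _ : E, ENNReal.ofReal (V / m) ∂μ := lintegral_mono fun x => by
        rw [← ofReal_integral_eq_lintegral_ofReal (hint x) (.of_forall fun _ => sq_nonneg _),
          integral_sq_sub_empiricalMean_pi ν (hg2 x) hm]
        gcongr
        exact hV x
    _ = ENNReal.ofReal (V / m) := by simp

theorem exists_le_mul_and_le_mul_of_lintegral_le {X Y : Ω → ℝ≥0∞}
    (hX : AEMeasurable X ν) (hY : AEMeasurable Y ν) {A B p q : ℝ≥0∞}
    (hp : p ≠ ∞) (hq : q ≠ ∞) (hpq : p⁻¹ + q⁻¹ ≤ 1)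
    (hXA : ∫⁻ ω, X ω ∂ν ≤ A) (hYB : ∫⁻ ω, Y ω ∂ν ≤ B) :
    ∃ ω, X ω ≤ p * A ∧ Y ω ≤ q * B := by
  -- `A = 0` needs no separate case: then `∫⁻ X = 0` and `0 / 0 = 0` in `ℝ≥0∞`.
  have normalized : ∀ {Z : Ω → ℝ≥0∞} {C r : ℝ≥0∞}, AEMeasurable Z ν → r ≠ ∞ → r⁻¹ ≠ ∞ →
      ∫⁻ ω, Z ω ∂ν ≤ C → ∫⁻ ω, Z ω / (r * C) ∂ν ≤ r⁻¹ := by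
    intro Z C r hZ hr hr' hZC
    simp_rw [div_eq_mul_inv]
    rw [lintegral_mul_const'' _ hZ, ← div_eq_mul_inv]
    refine ENNReal.div_le_of_le_mul ?_
    rwa [← mul_assoc, ENNReal.inv_mul_cancel (by simpa using hr') hr, one_mul]
  have hsum : ∫⁻ ω, X ω / (p * A) + Y ω / (q * B) ∂ν ≤ 1 := by
    rw [lintegral_add_left' (hX.div_const _)]
    refine (add_le_add (normalized hX hp ?_ hXA) (normalized hY hq ?_ hYB)).trans hpq
    · exact ne_top_of_le_ne_top ENNReal.one_ne_top (le_self_add.trans hpq)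
    · exact ne_top_of_le_ne_top ENNReal.one_ne_top (le_add_self.trans hpq)
  obtain ⟨ω, hω⟩ := exists_le_lintegral ((hX.div_const (p * A)).add (hY.div_const (q * B)))
  have le_of_div_le_one : ∀ {a b : ℝ≥0∞}, a / b ≤ 1 → a ≤ b := fun h => by
    simpa using (ENNReal.div_le_iff_le_mul (Or.inr ENNReal.one_ne_top) (Or.inr one_ne_zero)).1 h
  exact ⟨ω, le_of_div_le_one (le_self_add.trans (hω.trans hsum)),
    le_of_div_le_one (le_add_self.trans (hω.trans hsum))⟩

theorem integral_abs_le_sqrt_integral_sq {a : Ω → ℝ} (ha : MemLp a 2 ν) :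
    ∫ w, |a w| ∂ν ≤ √(∫ w, a w ^ 2 ∂ν) := by
  have hvar := variance_nonneg |a| ν
  rw [variance_eq_sub ha.abs, sub_nonneg] at hvar
  exact Real.le_sqrt_of_sq_le (by simpa [sq_abs] using hvar)

theorem variance_le_integral_sq_of_abs_le {X Y : Ω → ℝ} (hX : AEStronglyMeasurable X ν)
    (hY : MemLp Y 2 ν) (hXY : ∀ ω, |X ω| ≤ |Y ω|) : Var[X; ν] ≤ ∫ ω, Y ω ^ 2 ∂ν := by
  have hX2 : MemLp X 2 ν := hY.of_le hX (.of_forall fun ω => by simpa using hXY ω)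
  refine (variance_le_expectation_sq hX).trans (integral_mono hX2.integrable_sq hY.integrable_sq
    fun ω => ?_)
  simpa only [Pi.pow_apply, sq_abs] using pow_le_pow_left₀ (abs_nonneg _) (hXY ω) 2

theorem lintegral_ofReal_sum_abs_comp_eval_pi {a : Ω → ℝ} (ha : Integrable a ν) (m : ℕ) :
    ∫⁻ W : Fin m → Ω, ENNReal.ofReal (∑ k, |a (W k)|) ∂(Measure.pi fun _ => ν)
      = ENNReal.ofReal (m * ∫ w, |a w| ∂ν) := by
  have hsum : Integrable (fun W : Fin m → Ω => ∑ k, |a (W k)|) (Measure.pi fun _ => ν) :=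
    integrable_finsetSum _ fun k _ => integrable_comp_eval (μ := fun _ : Fin m => ν) ha.abs
  rw [← integral_sum_comp_eval_pi ν ha.abs m, ofReal_integral_eq_lintegral_ofReal hsum
    (.of_forall fun _ => Finset.sum_nonneg fun _ _ => abs_nonneg _)]

theorem exists_sample_sq_sub_empiricalMean_le_and_sum_abs_le {E : Type*} [MeasurableSpace E]
    (μ : Measure E) [IsProbabilityMeasure μ] {g : Ω → E → ℝ} (hg : Measurable (Function.uncurry g))
    (hg2 : ∀ x, MemLp (g · x) 2 ν) {V : ℝ} (hV0 : 0 ≤ V) (hV : ∀ x, Var[(g · x); ν] ≤ V)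
    {a : Ω → ℝ} (ha : Measurable a) (ha1 : Integrable a ν) {m : ℕ} (hm : m ≠ 0) :
    ∃ W : Fin m → Ω,
      ∫ x, (∫ w, g w x ∂ν - (m : ℝ)⁻¹ * ∑ k, g (W k) x) ^ 2 ∂μ ≤ 3 * V / m ∧
      ∑ k, |a (W k)| ≤ 2 * (m * ∫ w, |a w| ∂ν) := by
  have h_weights : (3 : ℝ≥0∞)⁻¹ + 2⁻¹ ≤ 1 := by
    rw [← ENNReal.toReal_le_toReal (by simp) (by simp)]
    norm_num [ENNReal.toReal_add, ENNReal.toReal_inv]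
  have h_sum_meas : Measurable fun W : Fin m → Ω => ENNReal.ofReal (∑ k, |a (W k)|) :=
    (Finset.measurable_sum _ fun k _ => (ha.comp (measurable_pi_apply k)).abs).ennreal_ofReal
  obtain ⟨W, hW_err, hW_sum⟩ := exists_le_mul_and_le_mul_of_lintegral_le (Measure.pi fun _ => ν)
    (measurable_sq_sub_empiricalMean ν hg m).lintegral_prod_right.aemeasurable
    h_sum_meas.aemeasurable (by simp) (by simp) h_weights
    (lintegral_lintegral_sq_sub_empiricalMean_le ν μ hg hg2 hV hm)
    (lintegral_ofReal_sum_abs_comp_eval_pi ν ha1 m).le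
  refine ⟨W, integral_le_of_lintegral_ofReal_le (fun _ => sq_nonneg _) (by positivity) ?_, ?_⟩
  · rwa [mul_div_assoc, ENNReal.ofReal_mul zero_le_three, ENNReal.ofReal_ofNat]
  · rw [← ENNReal.ofReal_ofNat, ← ENNReal.ofReal_mul zero_le_two] at hW_sum
    have h_abs_nonneg : 0 ≤ ∫ w, |a w| ∂ν := integral_nonneg fun w => abs_nonneg (a w)
    exact (ENNReal.ofReal_le_ofReal_iff (by positivity)).1 hW_sum

end MonteCarlo

section Neuron

variable {d : ℕ} {σ : ℝ → ℝ}

theorem abs_sum_sphere1_mul_cube_le_one (w : Sphere1 d) (x : Cube d) :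
    |∑ i, w.1 i * x.1 i| ≤ 1 :=
  calc |∑ i, w.1 i * x.1 i| ≤ ∑ i, |w.1 i * x.1 i| := Finset.abs_sum_le_sum_abs _ _
    _ ≤ ∑ i, |w.1 i| := Finset.sum_le_sum fun i _ => by
      rw [abs_mul]
      exact mul_le_of_le_one_right (abs_nonneg _) (x.2 i)
    _ = 1 := w.2

theorem abs_mul_sigma_sum_le (hσ : ∀ t, |σ t| ≤ |t|) (c : ℝ) (w : Sphere1 d) (x : Cube d) :
    |c * σ (∑ i, w.1 i * x.1 i)| ≤ |c| :=
  (abs_mul _ _).trans_le <| mul_le_of_le_one_right (abs_nonneg _) <|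
    (hσ _).trans (abs_sum_sphere1_mul_cube_le_one w x)

theorem measurable_uncurry_mul_sigma_sum (hσ : Measurable σ) {a : Sphere1 d → ℝ}
    (ha : Measurable a) :
    Measurable (Function.uncurry fun (w : Sphere1 d) (x : Cube d) =>
      a w * σ (∑ i, w.1 i * x.1 i)) :=
  (ha.comp measurable_fst).mul (hσ.comp (Finset.measurable_sum _ fun i _ =>
    ((measurable_pi_apply i).comp (measurable_subtype_coe.comp measurable_fst)).mul
      ((measurable_pi_apply i).comp (measurable_subtype_coe.comp measurable_snd))))

end Neuron

/-- Approximation theorem: for `f ∈ B₂(X)` with an attained Barron norm `γ₂(f) = γ`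
(i.e. a representation `f(x) = ∫ a(w)σ(⟨w,x⟩)dπ(w)` with `∫ a² dπ = γ²`), and any
width `m`, there is a two-layer network `∑_k a_k σ(⟨w_k,x⟩)` with
`E_x (f(x) − f(x;θ̃))² ≤ 3γ²/m` and path norm `∑_k |a_k|‖w_k‖₁ ≤ 2γ`. -/
theorem stmt_3 (d m : ℕ) (hm : 0 < m) (σ : ℝ → ℝ) (hσm : Measurable σ)
    (hσlip : ∀ s t : ℝ, |σ s - σ t| ≤ |s - t|)
    (hσhom : ∀ (α t : ℝ), 0 ≤ α → σ (α * t) = α * σ t)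
    (μ : Measure (Cube d)) [IsProbabilityMeasure μ]
    (f : Cube d → ℝ) (γ : ℝ) (hγ : 0 ≤ γ)
    (π : Measure (Sphere1 d)) [IsProbabilityMeasure π]
    (a : Sphere1 d → ℝ) (ha : Measurable a) (ha2 : MemLp a 2 π)
    (hrep : ∀ x : Cube d, f x = ∫ w, a w * σ (∑ i, w.1 i * x.1 i) ∂π)
    (hnorm : ∫ w, (a w) ^ 2 ∂π = γ ^ 2) :
    ∃ (c : Fin m → ℝ) (w : Fin m → Fin d → ℝ),
      (∫ x, (f x - ∑ k, c k * σ (∑ i, w k i * x.1 i)) ^ 2 ∂μ ≤ 3 * γ ^ 2 / m) ∧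
      ∑ k, |c k| * ∑ i, |w k i| ≤ 2 * γ := by
  have hσ_le : ∀ t, |σ t| ≤ |t| := fun t => by
    simpa [show σ 0 = 0 by simpa using hσhom 0 0 le_rfl] using hσlip t 0
  set g : Sphere1 d → Cube d → ℝ := fun w x => a w * σ (∑ i, w.1 i * x.1 i)
  have hg : Measurable (Function.uncurry g) := measurable_uncurry_mul_sigma_sum hσm ha
  have hg_le : ∀ w x, |g w x| ≤ |a w| := fun w x => abs_mul_sigma_sum_le hσ_le (a w) w x
  have hg2 : ∀ x, MemLp (g · x) 2 π := fun x =>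
    ha2.of_le (hg.comp measurable_prodMk_right).aestronglyMeasurable
      (.of_forall fun w => by simpa using hg_le w x)
  have hV : ∀ x, Var[(g · x); π] ≤ γ ^ 2 := fun x => hnorm ▸
    variance_le_integral_sq_of_abs_le π (hg2 x).aestronglyMeasurable ha2 (hg_le · x)
  have h_abs : ∫ w, |a w| ∂π ≤ γ := by
    simpa [hnorm, Real.sqrt_sq hγ] using integral_abs_le_sqrt_integral_sq π ha2
  obtain ⟨W, hW_err, hW_sum⟩ := exists_sample_sq_sub_empiricalMean_le_and_sum_abs_le π μ hg hg2
    (sq_nonneg γ) hV ha (ha2.integrable one_le_two) hm.ne'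
  have h_net : ∀ x, ∑ k, a (W k) / m * σ (∑ i, (W k).1 i * x.1 i) = (m : ℝ)⁻¹ * ∑ k, g (W k) x :=
    fun x => by
      rw [Finset.mul_sum]
      exact Finset.sum_congr rfl fun k _ => by ring
  refine ⟨fun k => a (W k) / m, fun k => (W k).1, ?_, ?_⟩
  · simpa only [h_net, hrep] using hW_err
  · calc ∑ k, |a (W k) / m| * ∑ i, |(W k).1 i| = (∑ k, |a (W k)|) / m := by
          simp_rw [(W _).2, mul_one, abs_div, Nat.abs_cast, Finset.sum_div]
      _ ≤ 2 * (m * γ) / m := by gcongr; exact hW_sum.trans (by gcongr)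
      _ = 2 * γ := by field_simp
end

section
/- (Contraction lemma) Let φ_i : ℝ → ℝ be ρ-Lipschitz functions for i = 1,…,n, and let H be a set of functions from a domain Z to ℝ. Then the empirical Rademacher complexity satisfies R̂_n(φ∘H) ≤ ρ·R̂_n(H), where φ∘H = {z ↦ (φ₁(h(z₁)),…,φ_n(h(z_n))) applied coordinatewise, i.e. the class whose complexity is (1/n)E_ε[sup_h ∑_i ε_i φ_i(h(z_i))]}. -/
open Finset

private def sgn (b : Bool) : ℝ := if b then 1 else -1

private lemma sgn_not (b : Bool) : sgn (!b) = - sgn b := by cases b <;> simp [sgn]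

private def G {Z : Type*} {n : ℕ} (z : Fin n → Z) (ρ : ℝ) (φ : Fin n → ℝ → ℝ)
    (k : ℕ) (h : Z → ℝ) (i : Fin n) : ℝ :=
  if (i : ℕ) < k then ρ * h (z i) else φ i (h (z i))

private lemma keystep {ι : Type*} [Nonempty ι] (A f : ι → ℝ) (ψ : ℝ → ℝ) (ρ : ℝ)
    (hψ : ∀ α β : ℝ, |ψ α - ψ β| ≤ ρ * |α - β|)
    (hb1 : BddAbove (Set.range fun x => A x + ρ * f x))
    (hb2 : BddAbove (Set.range fun x => A x - ρ * f x)) :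
    (⨆ x, A x + ψ (f x)) + (⨆ x, A x - ψ (f x)) ≤
      (⨆ x, A x + ρ * f x) + (⨆ x, A x - ρ * f x) := by
  set C := (⨆ x, A x + ρ * f x) + (⨆ x, A x - ρ * f x) with hC
  have key : ∀ x y : ι, (A x + ψ (f x)) + (A y - ψ (f y)) ≤ C := by
    intro x y
    have h1 : ψ (f x) - ψ (f y) ≤ |ψ (f x) - ψ (f y)| := le_abs_self _
    have h2 := hψ (f x) (f y)
    rcases le_total (f y) (f x) with h | h
    · have habs : |f x - f y| = f x - f y := abs_of_nonneg (by linarith)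
      have l1 : A x + ρ * f x ≤ ⨆ x, A x + ρ * f x := le_ciSup hb1 x
      have l2 : A y - ρ * f y ≤ ⨆ x, A x - ρ * f x := le_ciSup hb2 y
      rw [habs] at h2
      linarith
    · have habs : |f x - f y| = -(f x - f y) := abs_of_nonpos (by linarith)
      have l1 : A y + ρ * f y ≤ ⨆ x, A x + ρ * f x := le_ciSup hb1 y
      have l2 : A x - ρ * f x ≤ ⨆ x, A x - ρ * f x := le_ciSup hb2 x
      rw [habs] at h2
      linarith
  have h3 : (⨆ x, A x + ψ (f x)) ≤ C - ⨆ y, A y - ψ (f y) := by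
    refine ciSup_le fun x => ?_
    have h4 : (⨆ y, A y - ψ (f y)) ≤ C - (A x + ψ (f x)) :=
      ciSup_le fun y => by linarith [key x y]
    linarith
  linarith

private lemma bdd_aux {Z : Type*} {n : ℕ} (z : Fin n → Z) (H : Set (Z → ℝ))
    (ρ : ℝ) (φ : Fin n → ℝ → ℝ)
    (hb : ∀ s : Fin n → ℝ, BddAbove (Set.range fun h : H => ∑ i, s i * h.1 (z i)))
    (hb' : ∀ s : Fin n → ℝ,
      BddAbove (Set.range fun h : H => ∑ i, s i * φ i (h.1 (z i))))
    (k : ℕ) (ε : Fin n → Bool) :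
    BddAbove (Set.range fun h : H => ∑ i, sgn (ε i) * G z ρ φ k h.1 i) := by
  have e1 : (fun h : H => ∑ i, sgn (ε i) * G z ρ φ k h.1 i) = fun h : H =>
      (∑ i : Fin n, (if (i : ℕ) < k then sgn (ε i) * ρ else 0) * h.1 (z i)) +
      (∑ i : Fin n, (if (i : ℕ) < k then 0 else sgn (ε i)) * φ i (h.1 (z i))) := by
    funext h
    rw [← Finset.sum_add_distrib]
    refine Finset.sum_congr rfl fun i _ => ?_
    by_cases hik : (i : ℕ) < k <;> simp [G, hik] <;> ring
  rw [e1]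
  obtain ⟨M1, hM1⟩ := hb fun i => if (i : ℕ) < k then sgn (ε i) * ρ else 0
  obtain ⟨M2, hM2⟩ := hb' fun i => if (i : ℕ) < k then 0 else sgn (ε i)
  refine ⟨M1 + M2, ?_⟩
  rintro _ ⟨h, rfl⟩
  exact add_le_add (hM1 (Set.mem_range_self h)) (hM2 (Set.mem_range_self h))

private lemma step_aux {Z : Type*} {n : ℕ} (z : Fin n → Z) (H : Set (Z → ℝ))
    (hH : H.Nonempty) (ρ : ℝ) (φ : Fin n → ℝ → ℝ)
    (hφ : ∀ i, ∀ α β : ℝ, |φ i α - φ i β| ≤ ρ * |α - β|)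
    (hb : ∀ s : Fin n → ℝ, BddAbove (Set.range fun h : H => ∑ i, s i * h.1 (z i)))
    (hb' : ∀ s : Fin n → ℝ,
      BddAbove (Set.range fun h : H => ∑ i, s i * φ i (h.1 (z i))))
    (k : ℕ) (hk : k < n) :
    ∑ ε : Fin n → Bool, ⨆ h : H, ∑ i, sgn (ε i) * G z ρ φ k h.1 i
      ≤ ∑ ε : Fin n → Bool, ⨆ h : H, ∑ i, sgn (ε i) * G z ρ φ (k + 1) h.1 i := by
  haveI : Nonempty H := hH.to_subtype
  set j : Fin n := ⟨k, hk⟩ with hj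
  set flip : (Fin n → Bool) → (Fin n → Bool) := fun ε => Function.update ε j (!ε j)
    with hflip
  have hinv : Function.Involutive flip := by
    intro ε; funext i
    by_cases h : i = j <;> simp [flip, Function.update_apply, h]
  have hflipj : ∀ ε, flip ε j = !ε j := by intro ε; simp [flip]
  have hflipi : ∀ ε (i : Fin n), i ≠ j → flip ε i = ε i := by
    intro ε i hi; simp [flip, Function.update_apply, hi]
  have hgne : ∀ (h : Z → ℝ) (i : Fin n), i ≠ j → G z ρ φ (k + 1) h i = G z ρ φ k h i := by
    intro h i hi
    have hik : (i : ℕ) ≠ k := fun hc => hi (Fin.ext hc)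
    simp only [G]
    rw [if_congr (show ((i : ℕ) < k + 1) ↔ ((i : ℕ) < k) by omega) rfl rfl]
  have hgj : ∀ h : Z → ℝ, G z ρ φ k h j = φ j (h (z j)) := by
    intro h; simp [G, hj]
  have hgj' : ∀ h : Z → ℝ, G z ρ φ (k + 1) h j = ρ * h (z j) := by
    intro h; simp [G, hj]
  have key : ∀ ε : Fin n → Bool,
      (⨆ h : H, ∑ i, sgn (ε i) * G z ρ φ k h.1 i)
        + (⨆ h : H, ∑ i, sgn (flip ε i) * G z ρ φ k h.1 i)
      ≤ (⨆ h : H, ∑ i, sgn (ε i) * G z ρ φ (k + 1) h.1 i)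
        + (⨆ h : H, ∑ i, sgn (flip ε i) * G z ρ φ (k + 1) h.1 i) := by
    intro ε
    have eA' : ∀ h : H, ∑ i ∈ univ.erase j, sgn (ε i) * G z ρ φ (k + 1) h.1 i
        = ∑ i ∈ univ.erase j, sgn (ε i) * G z ρ φ k h.1 i := fun h =>
      Finset.sum_congr rfl fun i hi => by rw [hgne h.1 i (Finset.ne_of_mem_erase hi)]
    have eAf : ∀ (m : ℕ) (h : H),
        ∑ i ∈ univ.erase j, sgn (flip ε i) * G z ρ φ m h.1 i
          = ∑ i ∈ univ.erase j, sgn (ε i) * G z ρ φ m h.1 i := fun m h =>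
      Finset.sum_congr rfl fun i hi => by rw [hflipi ε i (Finset.ne_of_mem_erase hi)]
    have e1 : ∀ h : H, ∑ i, sgn (ε i) * G z ρ φ k h.1 i
        = (∑ i ∈ univ.erase j, sgn (ε i) * G z ρ φ k h.1 i)
          + sgn (ε j) * φ j (h.1 (z j)) := by
      intro h
      rw [← Finset.add_sum_erase _ _ (mem_univ j), hgj]
      ring
    have e2 : ∀ h : H, ∑ i, sgn (flip ε i) * G z ρ φ k h.1 i
        = (∑ i ∈ univ.erase j, sgn (ε i) * G z ρ φ k h.1 i)
          - sgn (ε j) * φ j (h.1 (z j)) := by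
      intro h
      rw [← Finset.add_sum_erase _ _ (mem_univ j), hgj, eAf, hflipj, sgn_not]
      ring
    have e3 : ∀ h : H, ∑ i, sgn (ε i) * G z ρ φ (k + 1) h.1 i
        = (∑ i ∈ univ.erase j, sgn (ε i) * G z ρ φ k h.1 i)
          + sgn (ε j) * (ρ * h.1 (z j)) := by
      intro h
      rw [← Finset.add_sum_erase _ _ (mem_univ j), hgj', eA']
      ring
    have e4 : ∀ h : H, ∑ i, sgn (flip ε i) * G z ρ φ (k + 1) h.1 i
        = (∑ i ∈ univ.erase j, sgn (ε i) * G z ρ φ k h.1 i)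
          - sgn (ε j) * (ρ * h.1 (z j)) := by
      intro h
      rw [← Finset.add_sum_erase _ _ (mem_univ j), hgj', eAf, eA', hflipj, sgn_not]
      ring
    have hbd1 : BddAbove (Set.range fun h : H =>
        (∑ i ∈ univ.erase j, sgn (ε i) * G z ρ φ k h.1 i)
          + sgn (ε j) * (ρ * h.1 (z j))) := by
      have heq : (fun h : H => (∑ i ∈ univ.erase j, sgn (ε i) * G z ρ φ k h.1 i)
            + sgn (ε j) * (ρ * h.1 (z j)))
          = fun h : H => ∑ i, sgn (ε i) * G z ρ φ (k + 1) h.1 i :=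
        funext fun h => (e3 h).symm
      rw [heq]; exact bdd_aux z H ρ φ hb hb' (k + 1) ε
    have hbd2 : BddAbove (Set.range fun h : H =>
        (∑ i ∈ univ.erase j, sgn (ε i) * G z ρ φ k h.1 i)
          - sgn (ε j) * (ρ * h.1 (z j))) := by
      have heq : (fun h : H => (∑ i ∈ univ.erase j, sgn (ε i) * G z ρ φ k h.1 i)
            - sgn (ε j) * (ρ * h.1 (z j)))
          = fun h : H => ∑ i, sgn (flip ε i) * G z ρ φ (k + 1) h.1 i :=
        funext fun h => (e4 h).symm
      rw [heq]; exact bdd_aux z H ρ φ hb hb' (k + 1) (flip ε)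
    rw [iSup_congr e1, iSup_congr e2, iSup_congr e3, iSup_congr e4]
    cases hεj : ε j with
    | true =>
      have hs : sgn true = 1 := by simp [sgn]
      simp only [hεj, hs, one_mul] at hbd1 hbd2 ⊢
      exact keystep (fun h : H => ∑ i ∈ univ.erase j, sgn (ε i) * G z ρ φ k h.1 i)
        (fun h : H => h.1 (z j)) (φ j) ρ (hφ j) hbd1 hbd2
    | false =>
      have hs : sgn false = -1 := by simp [sgn]
      simp only [hεj, hs, neg_one_mul, sub_neg_eq_add, ← sub_eq_add_neg] at hbd1 hbd2 ⊢
      have := keystep (fun h : H => ∑ i ∈ univ.erase j, sgn (ε i) * G z ρ φ k h.1 i)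
        (fun h : H => h.1 (z j)) (φ j) ρ (hφ j) hbd2 hbd1
      beta_reduce at this ⊢
      linarith
  have hsum : ∀ m : ℕ,
      ∑ ε : Fin n → Bool, ⨆ h : H, ∑ i, sgn (flip ε i) * G z ρ φ m h.1 i
        = ∑ ε : Fin n → Bool, ⨆ h : H, ∑ i, sgn (ε i) * G z ρ φ m h.1 i := by
    intro m
    exact Equiv.sum_comp hinv.toPerm
      (fun ε => ⨆ h : H, ∑ i, sgn (ε i) * G z ρ φ m h.1 i)
  have h2 := Finset.sum_le_sum (fun ε (_ : ε ∈ (univ : Finset (Fin n → Bool))) => key ε)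
  rw [Finset.sum_add_distrib, Finset.sum_add_distrib, hsum k, hsum (k + 1)] at h2
  linarith

/-- Contraction (Talagrand) lemma for the empirical Rademacher complexity: if each
`φ i` is `ρ`-Lipschitz, then `R̂_n(φ∘H) ≤ ρ · R̂_n(H)`, where the expectation over
Rademacher signs is written as an average over all sign vectors `ε : Fin n → Bool`. -/
theorem stmt_5 {Z : Type*} (n : ℕ) (hn : 0 < n) (z : Fin n → Z)
    (H : Set (Z → ℝ)) (hH : H.Nonempty)
    (ρ : ℝ) (hρ : 0 ≤ ρ) (φ : Fin n → ℝ → ℝ)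
    (hφ : ∀ i, ∀ α β : ℝ, |φ i α - φ i β| ≤ ρ * |α - β|)
    (hb : ∀ s : Fin n → ℝ, BddAbove (Set.range fun h : H => ∑ i, s i * h.1 (z i)))
    (hb' : ∀ s : Fin n → ℝ,
      BddAbove (Set.range fun h : H => ∑ i, s i * φ i (h.1 (z i)))) :
    (1 / (n : ℝ)) * ((1 / (2 ^ n : ℝ)) * ∑ ε : Fin n → Bool,
        ⨆ h : H, ∑ i, (if ε i then (1 : ℝ) else -1) * φ i (h.1 (z i)))
      ≤ ρ * ((1 / (n : ℝ)) * ((1 / (2 ^ n : ℝ)) * ∑ ε : Fin n → Bool,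
          ⨆ h : H, ∑ i, (if ε i then (1 : ℝ) else -1) * h.1 (z i))) := by
  haveI : Nonempty H := hH.to_subtype
  set T : ℕ → ℝ := fun k => ∑ ε : Fin n → Bool, ⨆ h : H, ∑ i, sgn (ε i) * G z ρ φ k h.1 i
    with hT
  have mono : ∀ k, k ≤ n → T 0 ≤ T k := by
    intro k
    induction k with
    | zero => intro _; exact le_refl _
    | succ m ih =>
      intro hm
      exact (ih (Nat.le_of_succ_le hm)).trans (step_aux z H hH ρ φ hφ hb hb' m hm)
  have hTn : T n = ρ * ∑ ε : Fin n → Bool,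
      ⨆ h : H, ∑ i, (if ε i then (1 : ℝ) else -1) * h.1 (z i) := by
    rw [hT, Finset.mul_sum]
    refine Finset.sum_congr rfl fun ε _ => ?_
    rw [Real.mul_iSup_of_nonneg hρ]
    refine iSup_congr fun h => ?_
    rw [Finset.mul_sum]
    refine Finset.sum_congr rfl fun i _ => ?_
    by_cases hεi : ε i <;> simp [G, i.isLt, sgn, hεi] <;> try ring
  have hT0 : T 0 = ∑ ε : Fin n → Bool,
      ⨆ h : H, ∑ i, (if ε i then (1 : ℝ) else -1) * φ i (h.1 (z i)) := by
    rw [hT]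
    refine Finset.sum_congr rfl fun ε _ => iSup_congr fun h =>
      Finset.sum_congr rfl fun i _ => by simp [G, sgn]
  have hmain : T 0 ≤ ρ * ∑ ε : Fin n → Bool,
      ⨆ h : H, ∑ i, (if ε i then (1 : ℝ) else -1) * h.1 (z i) := by
    rw [← hTn]; exact mono n le_rfl
  rw [← hT0]
  rw [show ρ * ((1 / (n : ℝ)) * ((1 / (2 ^ n : ℝ)) * ∑ ε : Fin n → Bool,
      ⨆ h : H, ∑ i, (if ε i then (1 : ℝ) else -1) * h.1 (z i)))
    = (1 / (n : ℝ)) * ((1 / (2 ^ n : ℝ)) * (ρ * ∑ ε : Fin n → Bool,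
      ⨆ h : H, ∑ i, (if ε i then (1 : ℝ) else -1) * h.1 (z i))) by ring]
  exact mul_le_mul_of_nonneg_left
    (mul_le_mul_of_nonneg_left hmain (by positivity)) (by positivity)
end

section
/- Let F_Q = {f(·;θ) : ‖θ‖_P ≤ Q} be the set of two-layer networks f(x;θ) = ∑_{k=1}^m a_k σ(⟨w_k,x⟩) whose path norm ‖θ‖_P = ∑_k |a_k|‖w_k‖₁ is at most Q, where σ is 1-Lipschitz and positively homogeneous. Then for any samples x₁,…,x_n ∈ [−1,1]^d, the empirical Rademacher complexity satisfies R̂_n(F_Q) ≤ 2Q√(2 ln(2d)/n). -/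
/-!
Write `T(u) = ∑ᵢ εᵢ σ(⟨u, xᵢ⟩)`. By positive homogeneity every neuron `a σ(⟨w, ·⟩)` equals
`a ‖w‖₁ σ(⟨u, ·⟩)` with `‖u‖₁ ≤ 1`, so for each sign vector the supremum over the class is at most
`Q (sup_u T(u) + sup_u (-T(u)))`. Averaged over the signs, both suprema are bounded by the
Ledoux–Talagrand contraction (applied to the 1-Lipschitz maps `σ` and `-σ`) by the Rademacher
complexity of the linear functionals on the `ℓ¹` ball. A linear functional attains its supremum on
that ball at one of the `2d` vertices `±eⱼ`, so Massart's finite class lemma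
(an exponential moment bound, Hoeffding's lemma and Jensen) gives `√(2 ln(2d) / n)`.
-/

open Finset

namespace Rademacher

open Real

def signVal (b : Bool) : ℝ := if b then 1 else -1

@[simp] lemma signVal_true : signVal true = 1 := rfl

@[simp] lemma signVal_false : signVal false = -1 := rfl

@[simp] lemma abs_signVal (b : Bool) : |signVal b| = 1 := by cases b <;> simp

@[simp] lemma signVal_not (b : Bool) : signVal (!b) = -signVal b := by cases b <;> simp

section SignedSum

variable {ι α : Type*} [Fintype ι]

def signedSum (ε : ι → Bool) (v : ι → ℝ) : ℝ := ∑ i, signVal (ε i) * v i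

lemma signedSum_le (ε : ι → Bool) {v : ι → ℝ} {B : ℝ} (hv : ∀ i, |v i| ≤ B) :
    signedSum ε v ≤ Fintype.card ι * B :=
  calc signedSum ε v ≤ ∑ _i : ι, B := sum_le_sum fun i _ =>
        (le_abs_self _).trans (by rw [abs_mul, abs_signVal, one_mul]; exact hv i)
    _ = Fintype.card ι * B := by simp

lemma bddAbove_range_signedSum (ε : ι → Bool) {F : α → ι → ℝ} {B : ℝ}
    (hF : ∀ a i, |F a i| ≤ B) : BddAbove (Set.range fun a => signedSum ε (F a)) :=
  ⟨_, Set.forall_mem_range.2 fun a => signedSum_le ε (hF a)⟩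

lemma signedSum_neg (ε : ι → Bool) (v : ι → ℝ) :
    signedSum ε (fun i => -v i) = -signedSum ε v := by
  simp [signedSum]

lemma signedSum_update [DecidableEq ι] (ε : ι → Bool) (v : ι → ℝ) (i₀ : ι) (b : Bool) (y : ℝ) :
    signedSum (Function.update ε i₀ b) (Function.update v i₀ y) =
      signVal b * y + ∑ i ∈ univ.erase i₀, signVal (ε i) * v i := by
  rw [signedSum, ← add_sum_erase _ _ (mem_univ i₀)]
  simp only [Function.update_self]
  congr 1
  refine sum_congr rfl fun i hi => ?_
  rw [Function.update_of_ne (ne_of_mem_erase hi), Function.update_of_ne (ne_of_mem_erase hi)]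

end SignedSum

lemma abs_le_abs_apply_zero_add {φ : ℝ → ℝ} (hφ : LipschitzWith 1 φ) (t : ℝ) :
    |φ t| ≤ |φ 0| + |t| := by
  have := hφ.dist_le_mul t 0
  rw [NNReal.coe_one, one_mul, Real.dist_eq, Real.dist_eq, sub_zero] at this
  linarith [abs_sub_abs_le_abs_sub (φ t) (φ 0)]

lemma iSup_add_iSup_neg_le {α : Type*} [Nonempty α] (a b R : α → ℝ)
    (hab : ∀ c₁ c₂, |b c₁ - b c₂| ≤ |a c₁ - a c₂|)
    (ha : BddAbove (Set.range fun c => a c + R c))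
    (ha' : BddAbove (Set.range fun c => -a c + R c)) :
    (⨆ c, b c + R c) + (⨆ c, -b c + R c) ≤ (⨆ c, a c + R c) + (⨆ c, -a c + R c) := by
  set X := (⨆ c, a c + R c) + (⨆ c, -a c + R c)
  have key c₁ c₂ : b c₁ + R c₁ + (-b c₂ + R c₂) ≤ X := by
    have h₁ := le_ciSup ha c₁
    have h₂ := le_ciSup ha' c₁
    have h₃ := le_ciSup ha c₂
    have h₄ := le_ciSup ha' c₂
    have h := (le_abs_self _).trans (hab c₁ c₂)
    rcases abs_cases (a c₁ - a c₂) with ⟨h₅, -⟩ | ⟨h₅, -⟩ <;> linarith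
  have h c₁ : b c₁ + R c₁ + (⨆ c, -b c + R c) ≤ X :=
    le_sub_iff_add_le'.1 (ciSup_le fun c₂ => le_sub_iff_add_le'.2 (key c₁ c₂))
  exact le_sub_iff_add_le.1 (ciSup_le fun c₁ => le_sub_iff_add_le.2 (h c₁))

lemma sum_log_le_card_mul_log_div {β : Type*} [Fintype β] [Nonempty β] {Z : β → ℝ}
    (hZ : ∀ b, 0 < Z b) :
    ∑ b, log (Z b) ≤ Fintype.card β * log ((∑ b, Z b) / Fintype.card β) := by
  have hN : (0 : ℝ) < Fintype.card β := Nat.cast_pos.2 Fintype.card_pos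
  have := strictConcaveOn_log_Ioi.concaveOn.le_map_sum (t := univ)
    (w := fun _ => (Fintype.card β : ℝ)⁻¹) (p := Z) (fun _ _ => by positivity)
    (by simp [hN.ne']) (fun b _ => hZ b)
  simp only [smul_eq_mul, inv_mul_eq_div, ← sum_div] at this
  rwa [← div_le_iff₀' hN]

section L1Ball

variable {κ : Type*} [Fintype κ]

def l1Ball (κ : Type*) [Fintype κ] : Set (κ → ℝ) := {u | ∑ j, |u j| ≤ 1}

instance : Nonempty (l1Ball κ) := ⟨⟨0, by simp [l1Ball]⟩⟩

lemma sum_mul_le_iSup_signVal_mul [Nonempty κ] {u : κ → ℝ} (hu : u ∈ l1Ball κ) (w : κ → ℝ) :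
    ∑ j, u j * w j ≤ ⨆ p : κ × Bool, signVal p.2 * w p.1 := by
  set M := ⨆ p : κ × Bool, signVal p.2 * w p.1
  have le_M (p : κ × Bool) : signVal p.2 * w p.1 ≤ M :=
    le_ciSup (Finite.bddAbove_range fun p : κ × Bool => signVal p.2 * w p.1) p
  have hw j : |w j| ≤ M :=
    abs_le.2 ⟨neg_le.1 (by simpa using le_M (j, false)), by simpa using le_M (j, true)⟩
  have hM : 0 ≤ M := (abs_nonneg _).trans (hw (Classical.arbitrary κ))
  calc ∑ j, u j * w j ≤ ∑ j, |u j| * M := sum_le_sum fun j _ =>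
        (le_abs_self _).trans (by rw [abs_mul]; gcongr; exact hw j)
    _ = (∑ j, |u j|) * M := (sum_mul ..).symm
    _ ≤ M := mul_le_of_le_one_left hM hu

lemma exists_mem_l1Ball_eq_smul (w : κ → ℝ) : ∃ u ∈ l1Ball κ, w = (∑ j, |w j|) • u := by
  by_cases hw : ∑ j, |w j| = 0
  · refine ⟨0, by simp [l1Ball], funext fun j => ?_⟩
    simpa using (sum_eq_zero_iff_of_nonneg fun j _ => abs_nonneg (w j)).1 hw j (mem_univ j)
  · refine ⟨(∑ j, |w j|)⁻¹ • w, ?_, by rw [smul_smul, mul_inv_cancel₀ hw, one_smul]⟩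
    have hpos : 0 ≤ (∑ j, |w j|)⁻¹ := inv_nonneg.2 (sum_nonneg fun j _ => abs_nonneg _)
    simp [l1Ball, abs_mul, abs_of_nonneg hpos, ← mul_sum, inv_mul_cancel₀ hw]

lemma abs_sum_mul_le_one {u : κ → ℝ} (hu : u ∈ l1Ball κ) {z : κ → ℝ} (hz : ∀ j, |z j| ≤ 1) :
    |∑ j, u j * z j| ≤ 1 :=
  calc |∑ j, u j * z j| ≤ ∑ j, |u j| :=
        (abs_sum_le_sum_abs _ _).trans <| sum_le_sum fun j _ => by
          rw [abs_mul]; exact mul_le_of_le_one_right (abs_nonneg _) (hz j)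
    _ ≤ 1 := hu

lemma mul_signedSum_le_of_l1Ball {ι : Type*} [Fintype ι] {σ : ℝ → ℝ}
    (hσhom : ∀ α t : ℝ, 0 ≤ α → σ (α * t) = α * σ t) (x : ι → κ → ℝ) (ε : ι → Bool) {A B : ℝ}
    (hA : ∀ u ∈ l1Ball κ, signedSum ε (fun i => σ (∑ j, u j * x i j)) ≤ A)
    (hB : ∀ u ∈ l1Ball κ, -signedSum ε (fun i => σ (∑ j, u j * x i j)) ≤ B) (c : ℝ)
    (w : κ → ℝ) :
    c * signedSum ε (fun i => σ (∑ j, w j * x i j)) ≤ |c| * (∑ j, |w j|) * (A + B) := by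
  set T : (κ → ℝ) → ℝ := fun w => signedSum ε fun i => σ (∑ j, w j * x i j)
  have hσ0 : σ 0 = 0 := by simpa using hσhom 0 0 le_rfl
  have hT0 : T 0 = 0 := by simp [T, signedSum, hσ0]
  have h0 : (0 : κ → ℝ) ∈ l1Ball κ := by simp [l1Ball]
  have hA0 : 0 ≤ A := by rw [← hT0]; exact hA 0 h0
  have hB0 : 0 ≤ B := by rw [← neg_zero, ← hT0]; exact hB 0 h0
  obtain ⟨u, hu, hw⟩ := exists_mem_l1Ball_eq_smul w
  set r := ∑ j, |w j|
  have hr : 0 ≤ r := sum_nonneg fun j _ => abs_nonneg _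
  have hTw : T w = r * T u := by
    simp only [T, signedSum, hw, Pi.smul_apply, smul_eq_mul, mul_assoc, ← mul_sum, hσhom r _ hr,
      mul_left_comm _ r]
  have hTu_le := hA u hu
  have hTu_ge := hB u hu
  have key (c' : ℝ) : c' * T u ≤ |c'| * (A + B) := by
    rcases abs_cases c' with ⟨h, hc⟩ | ⟨h, hc⟩ <;> rw [h] <;> nlinarith
  calc c * T w = (c * r) * T u := by rw [hTw]; ring
    _ ≤ |c * r| * (A + B) := key _
    _ = |c| * r * (A + B) := by rw [abs_mul, abs_of_nonneg hr]

theorem iSup_signedSum_network_le {ι H : Type*} [Fintype ι] [Fintype H] {σ : ℝ → ℝ}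
    (hσ : LipschitzWith 1 σ) (hσhom : ∀ α t : ℝ, 0 ≤ α → σ (α * t) = α * σ t) {Q : ℝ}
    (hQ : 0 ≤ Q) (x : ι → κ → ℝ) (hx : ∀ i j, |x i j| ≤ 1) (ε : ι → Bool) :
    ⨆ θ : {p : (H → ℝ) × (H → κ → ℝ) // ∑ k, |p.1 k| * ∑ j, |p.2 k j| ≤ Q},
        signedSum ε (fun i => ∑ k, θ.1.1 k * σ (∑ j, θ.1.2 k j * x i j)) ≤
      Q * ((⨆ u : l1Ball κ, signedSum ε fun i => σ (∑ j, u.1 j * x i j)) +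
        ⨆ u : l1Ball κ, signedSum ε fun i => -σ (∑ j, u.1 j * x i j)) := by
  set A := ⨆ u : l1Ball κ, signedSum ε fun i => σ (∑ j, u.1 j * x i j)
  set B := ⨆ u : l1Ball κ, signedSum ε fun i => -σ (∑ j, u.1 j * x i j)
  have hσ0 : σ 0 = 0 := by simpa using hσhom 0 0 le_rfl
  have hσx (u : l1Ball κ) i : |σ (∑ j, u.1 j * x i j)| ≤ 1 :=
    calc |σ (∑ j, u.1 j * x i j)| ≤ |σ 0| + |∑ j, u.1 j * x i j| :=
          abs_le_abs_apply_zero_add hσ _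
      _ ≤ 1 := by rw [hσ0, abs_zero, zero_add]; exact abs_sum_mul_le_one u.2 (hx i)
  have hA : ∀ u ∈ l1Ball κ, signedSum ε (fun i => σ (∑ j, u j * x i j)) ≤ A := fun u hu =>
    le_ciSup (bddAbove_range_signedSum ε hσx) ⟨u, hu⟩
  have hB : ∀ u ∈ l1Ball κ, -signedSum ε (fun i => σ (∑ j, u j * x i j)) ≤ B := fun u hu => by
    rw [← signedSum_neg]
    exact le_ciSup (bddAbove_range_signedSum ε fun u i => (abs_neg _).trans_le (hσx u i)) ⟨u, hu⟩
  have hAB : 0 ≤ A + B := by linarith [hA 0 (by simp [l1Ball]), hB 0 (by simp [l1Ball])]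
  have : Nonempty {p : (H → ℝ) × (H → κ → ℝ) // ∑ k, |p.1 k| * ∑ j, |p.2 k j| ≤ Q} :=
    ⟨⟨0, by simpa using hQ⟩⟩
  refine ciSup_le fun ⟨⟨a, w⟩, hθ⟩ => ?_
  calc signedSum ε (fun i => ∑ k, a k * σ (∑ j, w k j * x i j)) =
        ∑ k, a k * signedSum ε (fun i => σ (∑ j, w k j * x i j)) := by
        simp only [signedSum, mul_sum, mul_left_comm]
        exact sum_comm
    _ ≤ ∑ k, |a k| * (∑ j, |w k j|) * (A + B) :=
        sum_le_sum fun k _ => mul_signedSum_le_of_l1Ball hσhom x ε hA hB (a k) (w k)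
    _ ≤ Q * (A + B) := by rw [← sum_mul]; gcongr

end L1Ball

section RademacherSum

variable {ι α : Type*} [Fintype ι] [DecidableEq ι]

/-- `2 ^ |ι| * |ι|` times the empirical Rademacher complexity of `{F a | a : α}`: the expectation
over the signs is a sum over all sign vectors, and the factor `1 / |ι|` is left out. -/
noncomputable def rademacherSum (F : α → ι → ℝ) : ℝ := ∑ ε : ι → Bool, ⨆ a, signedSum ε (F a)

/-- Pairing each sign vector with its flip at `i₀` reduces this to `iSup_add_iSup_neg_le`. -/
lemma rademacherSum_update_le [Nonempty α] {F : α → ι → ℝ} {B : ℝ} (hF : ∀ a i, |F a i| ≤ B)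
    {φ : ℝ → ℝ} (hφ : LipschitzWith 1 φ) (i₀ : ι) :
    rademacherSum (fun a => Function.update (F a) i₀ (φ (F a i₀))) ≤ rademacherSum F := by
  let flip (ε : ι → Bool) := Function.update ε i₀ (!ε i₀)
  have hflip : Function.Involutive flip := fun ε => by simp [flip]
  have sum_flip (G : α → ι → ℝ) :
      ∑ ε, ⨆ a, signedSum (flip ε) (G a) = ∑ ε, ⨆ a, signedSum ε (G a) :=
    Equiv.sum_comp (hflip.toPerm flip) fun ε => ⨆ a, signedSum ε (G a)
  have pair (ε : ι → Bool) :
      (⨆ a, signedSum ε (Function.update (F a) i₀ (φ (F a i₀)))) +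
          ⨆ a, signedSum (flip ε) (Function.update (F a) i₀ (φ (F a i₀))) ≤
        (⨆ a, signedSum ε (F a)) + ⨆ a, signedSum (flip ε) (F a) := by
    set s := signVal (ε i₀)
    set R : α → ℝ := fun a => ∑ i ∈ univ.erase i₀, signVal (ε i) * F a i
    have split (G : α → ℝ) (a : α) :
        signedSum ε (Function.update (F a) i₀ (G a)) = s * G a + R a ∧
          signedSum (flip ε) (Function.update (F a) i₀ (G a)) = -(s * G a) + R a := by
      constructor
      · simpa only [Function.update_eq_self] using signedSum_update ε (F a) i₀ (ε i₀) (G a)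
      · rw [signedSum_update, signVal_not, neg_mul]
    have hφε a := (split (φ <| F · i₀) a).1
    have hφflip a := (split (φ <| F · i₀) a).2
    have hFε a := (split (F · i₀) a).1
    have hFflip a := (split (F · i₀) a).2
    simp only [Function.update_eq_self] at hFε hFflip
    have hbdd := bddAbove_range_signedSum ε hF
    have hbdd' := bddAbove_range_signedSum (flip ε) hF
    simp only [hφε, hφflip, hFε, hFflip] at hbdd hbdd' ⊢
    refine iSup_add_iSup_neg_le _ _ _ (fun a₁ a₂ => ?_) hbdd hbdd'
    rw [← mul_sub, ← mul_sub, abs_mul, abs_mul, abs_signVal, one_mul, one_mul, ← Real.dist_eq,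
      ← Real.dist_eq]
    simpa using hφ.dist_le_mul (F a₁ i₀) (F a₂ i₀)
  have := sum_le_sum fun ε (_ : ε ∈ univ) => pair ε
  rw [sum_add_distrib, sum_add_distrib, sum_flip, sum_flip] at this
  unfold rademacherSum
  linarith

theorem rademacherSum_comp_le [Nonempty α] {F : α → ι → ℝ} {B : ℝ} (hF : ∀ a i, |F a i| ≤ B)
    {φ : ℝ → ℝ} (hφ : LipschitzWith 1 φ) :
    rademacherSum (fun a i => φ (F a i)) ≤ rademacherSum F := by
  suffices ∀ A : Finset ι,
      rademacherSum (fun a i => if i ∈ A then φ (F a i) else F a i) ≤ rademacherSum F by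
    simpa using this univ
  intro A
  induction A using Finset.induction_on with
  | empty => simp
  | insert i₀ A hi₀ ih =>
    set G : α → ι → ℝ := fun a i => if i ∈ A then φ (F a i) else F a i
    have hG a i : |G a i| ≤ |φ 0| + B := by
      by_cases hi : i ∈ A
      · simp only [G, hi, if_true]
        linarith [abs_le_abs_apply_zero_add hφ (F a i), hF a i]
      · simp only [G, hi, if_false]
        linarith [hF a i, abs_nonneg (φ 0)]
    have hinsert : (fun a i => if i ∈ insert i₀ A then φ (F a i) else F a i) =
        fun a => Function.update (G a) i₀ (φ (G a i₀)) := by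
      funext a i
      by_cases hi : i = i₀
      · subst hi; simp [G, hi₀]
      · simp [G, hi]
    rw [hinsert]
    exact (rademacherSum_update_le hG hφ i₀).trans ih

lemma sum_exp_signedSum (y : ι → ℝ) :
    ∑ ε : ι → Bool, exp (signedSum ε y) = ∏ i, 2 * cosh (y i) := by
  simp only [signedSum, exp_sum]
  rw [← Fintype.prod_sum fun i b => exp (signVal b * y i)]
  refine prod_congr rfl fun i _ => ?_
  rw [Fintype.sum_bool, signVal_true, signVal_false, one_mul, neg_one_mul, cosh_eq]
  ring

lemma sum_exp_signedSum_le (y : ι → ℝ) :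
    ∑ ε : ι → Bool, exp (signedSum ε y) ≤ 2 ^ Fintype.card ι * exp (∑ i, y i ^ 2 / 2) := by
  rw [sum_exp_signedSum, exp_sum, ← Finset.card_univ, ← prod_const, ← prod_mul_distrib]
  exact prod_le_prod (fun i _ => by positivity)
    fun i _ => mul_le_mul_of_nonneg_left (cosh_le_exp_half_sq _) zero_le_two

lemma sum_exp_mul_signedSum_le {v : ι → ℝ} (hv : ∀ i, |v i| ≤ 1) (t : ℝ) :
    ∑ ε : ι → Bool, exp (t * signedSum ε v) ≤
      2 ^ Fintype.card ι * exp (Fintype.card ι * t ^ 2 / 2) := by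
  have hsq : ∑ i, (t * v i) ^ 2 / 2 ≤ Fintype.card ι * t ^ 2 / 2 :=
    calc ∑ i, (t * v i) ^ 2 / 2 ≤ ∑ _i : ι, t ^ 2 / 2 := sum_le_sum fun i _ => by
          rw [mul_pow]
          gcongr
          exact mul_le_of_le_one_right (sq_nonneg t) ((sq_le_one_iff_abs_le_one _).2 (hv i))
      _ = Fintype.card ι * t ^ 2 / 2 := by simp [mul_div_assoc]
  calc ∑ ε : ι → Bool, exp (t * signedSum ε v) = ∑ ε : ι → Bool, exp (signedSum ε (t • v)) := by
        simp only [signedSum, mul_sum, Pi.smul_apply, smul_eq_mul, mul_left_comm t]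
    _ ≤ _ := (sum_exp_signedSum_le _).trans (by simp only [Pi.smul_apply, smul_eq_mul]; gcongr)

theorem rademacherSum_le_of_fintype [Fintype α] [Nonempty α] {v : α → ι → ℝ}
    (hv : ∀ a i, |v a i| ≤ 1) {t : ℝ} (ht : 0 < t) :
    rademacherSum v ≤
      2 ^ Fintype.card ι * (log (Fintype.card α) / t + Fintype.card ι * t / 2) := by
  set N := Fintype.card ι
  set Z : (ι → Bool) → ℝ := fun ε => ∑ a, exp (t * signedSum ε (v a))
  have hZ ε : 0 < Z ε := sum_pos (fun a _ => exp_pos _) univ_nonempty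
  have iSup_le_log ε : ⨆ a, signedSum ε (v a) ≤ log (Z ε) / t :=
    ciSup_le fun a => by
      rw [le_div_iff₀ ht, mul_comm, le_log_iff_exp_le (hZ ε)]
      exact single_le_sum (f := fun a => exp (t * signedSum ε (v a)))
        (fun _ _ => (exp_pos _).le) (mem_univ a)
  have sum_Z_le : ∑ ε, Z ε ≤ Fintype.card α * (2 ^ N * exp (N * t ^ 2 / 2)) := by
    rw [sum_comm, ← nsmul_eq_mul, ← Finset.card_univ, ← sum_const]
    exact sum_le_sum fun a _ => sum_exp_mul_signedSum_le (hv a) t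
  have hcard : (Fintype.card (ι → Bool) : ℝ) = 2 ^ N := by simp [N]
  have log_avg_le : log ((∑ ε, Z ε) / 2 ^ N) ≤ log (Fintype.card α) + N * t ^ 2 / 2 := by
    rw [← log_exp (N * t ^ 2 / 2), ← log_mul (by positivity) (exp_pos _).ne']
    exact log_le_log (div_pos (sum_pos (fun ε _ => hZ ε) univ_nonempty) (by positivity))
      (by rw [div_le_iff₀ (by positivity)]; linarith)
  calc rademacherSum v ≤ ∑ ε, log (Z ε) / t := sum_le_sum fun ε _ => iSup_le_log ε
    _ ≤ 2 ^ N * log ((∑ ε, Z ε) / 2 ^ N) / t := by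
        rw [← sum_div, ← hcard]
        exact div_le_div_of_nonneg_right (sum_log_le_card_mul_log_div hZ) ht.le
    _ ≤ 2 ^ N * (log (Fintype.card α) + N * t ^ 2 / 2) / t := by gcongr
    _ = 2 ^ N * (log (Fintype.card α) / t + N * t / 2) := by field_simp

theorem rademacherSum_le_sqrt_log_card [Nonempty ι] [Fintype α] {v : α → ι → ℝ}
    (hv : ∀ a i, |v a i| ≤ 1) (hα : 1 < Fintype.card α) :
    rademacherSum v ≤ 2 ^ Fintype.card ι *
      (Fintype.card ι * √(2 * log (Fintype.card α) / Fintype.card ι)) := by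
  have : Nonempty α := Fintype.card_pos_iff.1 (zero_lt_one.trans hα)
  set N : ℝ := (Fintype.card ι : ℝ)
  have hN : 0 < N := Nat.cast_pos.2 Fintype.card_pos
  have hlog : 0 < log (Fintype.card α) := log_pos (by exact_mod_cast hα)
  set t := √(2 * log (Fintype.card α) / N)
  have ht : 0 < t := sqrt_pos.2 (by positivity)
  have hlog_eq : log (Fintype.card α) = N * t ^ 2 / 2 := by
    rw [sq_sqrt (by positivity)]; field_simp
  calc rademacherSum v ≤ 2 ^ Fintype.card ι * (log (Fintype.card α) / t + N * t / 2) :=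
        rademacherSum_le_of_fintype hv ht
    _ = 2 ^ Fintype.card ι * (N * t) := by rw [hlog_eq]; field_simp; ring

theorem rademacherSum_l1Ball_le {κ : Type*} [Fintype κ] [Nonempty κ] [Nonempty ι]
    (x : ι → κ → ℝ) (hx : ∀ i j, |x i j| ≤ 1) :
    rademacherSum (fun (u : l1Ball κ) i => ∑ j, u.1 j * x i j) ≤ 2 ^ Fintype.card ι *
      (Fintype.card ι * √(2 * log (2 * Fintype.card κ) / Fintype.card ι)) := by
  set vertex : κ × Bool → ι → ℝ := fun p i => signVal p.2 * x i p.1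
  have hvertex p i : |vertex p i| ≤ 1 := by simpa [vertex] using hx i p.1
  have hcard : 1 < Fintype.card (κ × Bool) := by
    rw [Fintype.card_prod, Fintype.card_bool]
    linarith [Fintype.card_pos (α := κ)]
  calc rademacherSum (fun (u : l1Ball κ) i => ∑ j, u.1 j * x i j) ≤ rademacherSum vertex :=
        sum_le_sum fun ε _ => ciSup_le fun u => by
          have hvertex_sum p : signedSum ε (vertex p) = signVal p.2 * signedSum ε (x · p.1) := by
            simp only [signedSum, vertex, mul_sum, mul_left_comm]
          have hu_sum : signedSum ε (fun i => ∑ j, u.1 j * x i j) =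
              ∑ j, u.1 j * signedSum ε (x · j) := by
            simp only [signedSum, mul_sum, mul_left_comm]
            exact sum_comm
          simp only [hvertex_sum, hu_sum]
          exact sum_mul_le_iSup_signVal_mul u.2 _
    _ ≤ _ := by
        convert rademacherSum_le_sqrt_log_card hvertex hcard using 5
        simp [mul_comm]

end RademacherSum

end Rademacher

open Rademacher

/-- Rademacher complexity bound for two-layer networks with path norm at most `Q`:
`R̂_n(F_Q) ≤ 2Q√(2 ln(2d)/n)` for samples in `[-1,1]^d`, where `σ` is 1-Lipschitz
and positively homogeneous, and the expectation over Rademacher signs is written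
as an average over all sign vectors `ε : Fin n → Bool`. -/
theorem stmt_6 (d n m : ℕ) (hd : 0 < d) (hn : 0 < n)
    (σ : ℝ → ℝ) (hσlip : ∀ s t : ℝ, |σ s - σ t| ≤ |s - t|)
    (hσhom : ∀ (α t : ℝ), 0 ≤ α → σ (α * t) = α * σ t)
    (Q : ℝ) (hQ : 0 ≤ Q)
    (x : Fin n → Fin d → ℝ) (hx : ∀ i j, |x i j| ≤ 1) :
    (1 / (n : ℝ)) * ((1 / (2 ^ n : ℝ)) * ∑ ε : Fin n → Bool,
        ⨆ θ : {p : (Fin m → ℝ) × (Fin m → Fin d → ℝ) //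
            ∑ k, |p.1 k| * ∑ j, |p.2 k j| ≤ Q},
          ∑ i, (if ε i then (1 : ℝ) else -1) *
            ∑ k, θ.1.1 k * σ (∑ j, θ.1.2 k j * x i j))
      ≤ 2 * Q * Real.sqrt (2 * Real.log (2 * d) / n) := by
  have hσ : LipschitzWith 1 σ :=
    LipschitzWith.of_dist_le_mul fun s t => by simpa [Real.dist_eq] using hσlip s t
  have : Nonempty (Fin n) := ⟨⟨0, hn⟩⟩
  have : Nonempty (Fin d) := ⟨⟨0, hd⟩⟩
  have hlin (u : l1Ball (Fin d)) i : |∑ j, u.1 j * x i j| ≤ 1 := abs_sum_mul_le_one u.2 (hx i)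
  have hball := rademacherSum_l1Ball_le x hx
  simp only [Fintype.card_fin] at hball
  have hpos := rademacherSum_comp_le hlin hσ
  have hneg := rademacherSum_comp_le (φ := fun t => -σ t) hlin hσ.neg
  have hnet := sum_le_sum fun ε (_ : ε ∈ univ) =>
    iSup_signedSum_network_le (H := Fin m) hσ hσhom hQ x hx ε
  rw [← mul_sum, sum_add_distrib] at hnet
  calc _ ≤ (1 / (n : ℝ)) * ((1 / (2 ^ n : ℝ)) * (Q * (rademacherSum
          (fun (u : l1Ball (Fin d)) i => σ (∑ j, u.1 j * x i j)) + rademacherSum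
          (fun (u : l1Ball (Fin d)) i => -σ (∑ j, u.1 j * x i j))))) := by gcongr; exact hnet
    _ ≤ (1 / (n : ℝ)) * ((1 / (2 ^ n : ℝ)) *
          (Q * (2 * (2 ^ n * (n * √(2 * Real.log (2 * d) / n)))))) := by gcongr; linarith
    _ = 2 * Q * √(2 * Real.log (2 * d) / n) := by field_simp
end
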